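/- arXiv:math/0412031 — 5 statements merged into one kernel-verified Lean document; each statement's English description precedes it below -/
import Mathlib

section
/- For all k ∈ ℂ \ {0} with ᾱk ≠ 0, where ᾱ = e^{−2πi/3}: (1/√3)(−ik + λ/(−ik)) + (−k + λ/(−k)) = (1/√3)(−iᾱk + λ/(−iᾱk)) + (ᾱk + λ/(ᾱk)). Consequently E(−ik)·e(−k) = E(−iᾱk)·e(ᾱk), where E(k) = exp((k+λ/k)l/(2√3)) and e(k) = exp((k+λ/k)l/2). -/
theorem stmt_2 (lam l : ℝ) (hl : 0 < l)
    (αbar : ℂ) (hαbar : αbar = Complex.exp (-(2 * Real.pi * Complex.I / 3)))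
    (E e : ℂ → ℂ)
    (hE : ∀ k : ℂ, k ≠ 0 → E k = Complex.exp ((k + (lam : ℂ) / k) * l / (2 * Real.sqrt 3)))
    (he : ∀ k : ℂ, k ≠ 0 → e k = Complex.exp ((k + (lam : ℂ) / k) * l / 2)) :
    ∀ k : ℂ, k ≠ 0 → αbar * k ≠ 0 →
      (1 / (Real.sqrt 3 : ℂ)) * (-(Complex.I * k) + (lam : ℂ) / (-(Complex.I * k)))
          + (-k + (lam : ℂ) / (-k))
        = (1 / (Real.sqrt 3 : ℂ)) * (-(Complex.I * αbar * k) + (lam : ℂ) / (-(Complex.I * αbar * k)))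
          + (αbar * k + (lam : ℂ) / (αbar * k)) ∧
      E (-(Complex.I * k)) * e (-k) = E (-(Complex.I * αbar * k)) * e (αbar * k) := by
  intro k hk hαk
  have hs2 : (Real.sqrt 3 : ℂ) * (Real.sqrt 3 : ℂ) = 3 := by
    rw [← Complex.ofReal_mul, Real.mul_self_sqrt (by norm_num)]
    norm_num
  have hs0 : (Real.sqrt 3 : ℂ) ≠ 0 := by
    intro h
    rw [h, zero_mul] at hs2
    norm_num at hs2
  have hcos : Real.cos (2 * Real.pi / 3) = -(1/2) := by
    have : 2 * Real.pi / 3 = Real.pi - Real.pi / 3 := by ring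
    rw [this, Real.cos_pi_sub, Real.cos_pi_div_three]
  have hsin : Real.sin (2 * Real.pi / 3) = Real.sqrt 3 / 2 := by
    have : 2 * Real.pi / 3 = Real.pi - Real.pi / 3 := by ring
    rw [this, Real.sin_pi_sub, Real.sin_pi_div_three]
  have hab : αbar = -(1/2 : ℂ) - ((Real.sqrt 3 : ℂ) / 2) * Complex.I := by
    rw [hαbar]
    have h1 : -(2 * (Real.pi : ℂ) * Complex.I / 3) = ((-(2 * Real.pi / 3) : ℝ) : ℂ) * Complex.I := by
      push_cast; ring
    rw [h1, Complex.exp_mul_I, ← Complex.ofReal_cos, ← Complex.ofReal_sin,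
      Real.cos_neg, Real.sin_neg, hcos, hsin]
    push_cast
    ring
  have hαbar0 : αbar ≠ 0 := by rw [hαbar]; exact Complex.exp_ne_zero _
  have h1 : -(Complex.I * k) ≠ 0 := by
    simp [Complex.I_ne_zero, hk]
  have h2 : (-k : ℂ) ≠ 0 := neg_ne_zero.mpr hk
  have h3 : -(Complex.I * αbar * k) ≠ 0 := by
    simp [Complex.I_ne_zero, hαbar0, hk]
  have hI2 := Complex.I_mul_I
  have hainv : αbar⁻¹ = -(1/2 : ℂ) + ((Real.sqrt 3 : ℂ) / 2) * Complex.I := by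
    refine inv_eq_of_mul_eq_one_right ?_
    rw [hab]
    linear_combination (-(Complex.I * Complex.I) / 4) * hs2 + (-3/4 : ℂ) * hI2
  have t1 : (lam : ℂ) / (-(Complex.I * k)) = (lam : ℂ) * Complex.I / k := by
    rw [div_eq_div_iff h1 hk]
    linear_combination ((lam : ℂ) * k) * hI2
  have t2 : (lam : ℂ) / (-k) = -((lam : ℂ) / k) := by rw [div_neg]
  have t3 : (lam : ℂ) / (-(Complex.I * αbar * k)) = (lam : ℂ) * Complex.I * αbar⁻¹ / k := by
    rw [div_eq_div_iff h3 hk]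
    linear_combination ((lam : ℂ) * k) * hI2
      + ((lam : ℂ) * k * Complex.I * Complex.I) * (inv_mul_cancel₀ hαbar0)
  have t4 : (lam : ℂ) / (αbar * k) = (lam : ℂ) * αbar⁻¹ / k := by
    rw [div_eq_div_iff hαk hk]
    linear_combination (-(lam : ℂ) * k) * (inv_mul_cancel₀ hαbar0)
  have key : (1 / (Real.sqrt 3 : ℂ)) * (-(Complex.I * k) + (lam : ℂ) / (-(Complex.I * k)))
          + (-k + (lam : ℂ) / (-k))
        = (1 / (Real.sqrt 3 : ℂ)) * (-(Complex.I * αbar * k) + (lam : ℂ) / (-(Complex.I * αbar * k)))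
          + (αbar * k + (lam : ℂ) / (αbar * k)) := by
    rw [t1, t2, t3, t4, hainv, hab]
    linear_combination
      (k * (-((Real.sqrt 3 : ℂ) * Complex.I) / 2 - Complex.I * Complex.I / 2)
        + (lam : ℂ) * k⁻¹ * ((Real.sqrt 3 : ℂ) * Complex.I / 2 - Complex.I * Complex.I / 2))
          * (mul_inv_cancel₀ hs0)
      + ((k - (lam : ℂ) * k⁻¹) * ((Real.sqrt 3 : ℂ)⁻¹ * Complex.I / 2)) * hs2
      + (-(k + (lam : ℂ) * k⁻¹) / 2) * hI2
  refine ⟨key, ?_⟩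
  rw [hE _ h1, hE _ h3, he _ h2, he _ hαk, ← Complex.exp_add, ← Complex.exp_add]
  congr 1
  linear_combination ((l : ℂ) / 2) * key
end

section
/- Let λ, β₁, β₂, γ₁, γ₂ ∈ ℝ and for j = 1,2 define Hⱼ(k) = k·e^{iβⱼ} + λ/(k·e^{iβⱼ}) − γⱼ and Pⱼ(k) = Hⱼ(k)/Hⱼ*(k), where Hⱼ*(k) = k·e^{−iβⱼ} + λ/(k·e^{−iβⱼ}) − γⱼ. Suppose sin 3(β₁−β₂) = 0 and γ₂(3λ−γ₂²)·sin 3β₁ − γ₁(3λ−γ₁²)·sin 3β₂ = 0. Then for all k ∈ ℂ \ {0} such that both sides are defined: P₁(k)·P₁(αk)·P₁(ᾱk) = P₂(k)·P₂(αk)·P₂(ᾱk), where α = e^{2πi/3}. -/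
/-!
Put `J_{L,c}(z) = z + L / z - c`, so `Hⱼ(k) = J_{λ,γⱼ}(k e^{iβⱼ})` and
`Hⱼ*(k) = J_{λ,γⱼ}(k e^{-iβⱼ})`. The factorisation
`(x + y + z)(x + αy + α²z)(x + α²y + αz) = x³ + y³ + z³ - 3xyz`, applied to `z + L/z - c`, gives `J_{L,c}(z) J_{L,c}(αz) J_{L,c}(α²z) = J_{L³,c³-3Lc}(z³)`. So with `w = k³`,
`aⱼ = e^{3iβⱼ}` and `cⱼ = γⱼ³ - 3λγⱼ` the claim reads
`J_{λ³,c₁}(w a₁) J_{λ³,c₂}(w / a₂) = J_{λ³,c₂}(w a₂) J_{λ³,c₁}(w / a₁)`, a polynomial identity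
modulo `a₁² = a₂²` (this is `sin 3(β₁ - β₂) = 0`) and `c₂ (a₁ - a₁⁻¹) = c₁ (a₂ - a₂⁻¹)` (this is
the second hypothesis, since `a - a⁻¹ = 2i sin 3β`).
-/

open Complex

section Field

variable {K : Type*} [Field K]

theorem add_mul_add_mul_add_eq_sum_cubes {ω : K} (hω : ω ^ 2 + ω + 1 = 0)
    (x y z : K) :
    (x + y + z) * (ω * x + ω ^ 2 * y + z) * (ω ^ 2 * x + ω * y + z)
      = x ^ 3 + y ^ 3 + z ^ 3 - 3 * x * y * z := by
  linear_combination
    (x + y + z) * ((ω - 1) * (x ^ 2 + y ^ 2) + (ω ^ 2 - ω + 1) * x * y + (x + y) * z) * hω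

def joukowski (L c z : K) : K := z + L / z - c

theorem joukowski_mul_joukowski_mul_joukowski {ω : K} (hω : ω ^ 2 + ω + 1 = 0) (L c : K)
    {z : K} (hz : z ≠ 0) :
    joukowski L c z * joukowski L c (ω * z) * joukowski L c (ω ^ 2 * z)
      = joukowski (L ^ 3) (c ^ 3 - 3 * L * c) (z ^ 3) := by
  have hω0 : ω ≠ 0 := by rintro rfl; norm_num at hω
  have hω3 : ω ^ 3 = 1 := by linear_combination (ω - 1) * hω
  have h1 : L / (ω * z) = ω ^ 2 * (L / z) := by field_simp; linear_combination -L * hω3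
  have h2 : L / (ω ^ 2 * z) = ω * (L / z) := by field_simp; linear_combination -L * hω3
  simp only [joukowski, h1, h2, sub_eq_add_neg _ c]
  rw [add_mul_add_mul_add_eq_sum_cubes hω]
  field_simp
  ring

theorem joukowski_mul_joukowski_inv_comm {a b : K} (ha : a ≠ 0) (hb : b ≠ 0)
    (hab : a ^ 2 = b ^ 2)
    {c₁ c₂ : K} (hc : c₂ * (a - a⁻¹) = c₁ * (b - b⁻¹)) (L : K) {w : K} (hw : w ≠ 0) :
    joukowski L c₁ (w * a) * joukowski L c₂ (w * b⁻¹)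
      = joukowski L c₂ (w * b) * joukowski L c₁ (w * a⁻¹) := by
  unfold joukowski
  field_simp at hc ⊢
  linear_combination (w ^ 4 - L ^ 2) * hab + (w * L - w ^ 3) * hc

theorem joukowski_orbit_prod {ω : K} (hω : ω ^ 2 + ω + 1 = 0) {L c e : K} (he : e ≠ 0)
    {H : K → K} (hH : ∀ m, m ≠ 0 → H m = joukowski L c (m * e)) {k : K} (hk : k ≠ 0) :
    H k * H (ω * k) * H (ω ^ 2 * k) = joukowski (L ^ 3) (c ^ 3 - 3 * L * c) (k ^ 3 * e ^ 3) := by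
  have hω0 : ω ≠ 0 := by rintro rfl; norm_num at hω
  rw [hH k hk, hH _ (mul_ne_zero hω0 hk), hH _ (mul_ne_zero (pow_ne_zero 2 hω0) hk),
    mul_assoc ω, mul_assoc (ω ^ 2),
    joukowski_mul_joukowski_mul_joukowski hω L c (mul_ne_zero hk he), mul_pow]

end Field

theorem Complex.exp_I_mul_pow_sub_inv (x : ℂ) (n : ℕ) :
    exp (I * x) ^ n - (exp (I * x) ^ n)⁻¹ = 2 * sin (n * x) * I := by
  rw [← exp_nat_mul, ← exp_neg, two_sin]
  ring_nf
  rw [I_sq]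
  ring_nf

theorem Complex.exp_I_mul_pow_sq_eq_sq_of_sin_eq_zero {β₁ β₂ : ℝ} {n : ℕ}
    (h : Real.sin (n * (β₁ - β₂)) = 0) :
    (exp (I * β₁) ^ n) ^ 2 = (exp (I * β₂) ^ n) ^ 2 := by
  have ht := exp_I_mul_pow_sub_inv ((β₁ - β₂ : ℝ) : ℂ) n
  rw [← ofReal_natCast, ← ofReal_mul, ← ofReal_sin, h, ofReal_zero, mul_zero, zero_mul,
    ofReal_sub, mul_sub, exp_sub, div_pow] at ht
  have h₁ := pow_ne_zero n (exp_ne_zero (I * β₁))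
  have h₂ := pow_ne_zero n (exp_ne_zero (I * β₂))
  field_simp at ht
  linear_combination ht

theorem IsPrimitiveRoot.sq_add_self_add_one_eq_zero {R : Type*} [CommRing R] [IsDomain R] {ω : R}
    (hω : IsPrimitiveRoot ω 3) : ω ^ 2 + ω + 1 = 0 := by
  have h := hω.geom_sum_eq_zero (by norm_num)
  simp only [Finset.sum_range_succ, Finset.sum_range_zero, pow_zero, pow_one, zero_add] at h
  linear_combination h

theorem IsPrimitiveRoot.conj_eq_pow {ζ : ℂ} {n : ℕ} (hζ : IsPrimitiveRoot ζ (n + 1)) :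
    starRingEnd ℂ ζ = ζ ^ n := by
  rw [← inv_eq_conj (hζ.norm'_eq_one n.succ_ne_zero)]
  exact (eq_inv_of_mul_eq_one_left (by rw [← pow_succ, hζ.pow_eq_one])).symm

theorem stmt_4 (lam β₁ β₂ γ₁ γ₂ : ℝ)
    (α : ℂ) (hα : α = Complex.exp (2 * Real.pi * Complex.I / 3))
    (H₁ H₂ H₁s H₂s P₁ P₂ : ℂ → ℂ)
    (hH₁ : ∀ k : ℂ, k ≠ 0 → H₁ k = k * Complex.exp (Complex.I * β₁)
        + (lam : ℂ) / (k * Complex.exp (Complex.I * β₁)) - γ₁)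
    (hH₂ : ∀ k : ℂ, k ≠ 0 → H₂ k = k * Complex.exp (Complex.I * β₂)
        + (lam : ℂ) / (k * Complex.exp (Complex.I * β₂)) - γ₂)
    (hH₁s : ∀ k : ℂ, k ≠ 0 → H₁s k = k * Complex.exp (-(Complex.I * β₁))
        + (lam : ℂ) / (k * Complex.exp (-(Complex.I * β₁))) - γ₁)
    (hH₂s : ∀ k : ℂ, k ≠ 0 → H₂s k = k * Complex.exp (-(Complex.I * β₂))
        + (lam : ℂ) / (k * Complex.exp (-(Complex.I * β₂))) - γ₂)
    (hP₁ : ∀ k : ℂ, k ≠ 0 → P₁ k = H₁ k / H₁s k)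
    (hP₂ : ∀ k : ℂ, k ≠ 0 → P₂ k = H₂ k / H₂s k)
    (hsin : Real.sin (3 * (β₁ - β₂)) = 0)
    (hγ : γ₂ * (3 * lam - γ₂ ^ 2) * Real.sin (3 * β₁)
        - γ₁ * (3 * lam - γ₁ ^ 2) * Real.sin (3 * β₂) = 0) :
    ∀ k : ℂ, k ≠ 0 →
      H₁s k ≠ 0 → H₁s (α * k) ≠ 0 → H₁s ((starRingEnd ℂ) α * k) ≠ 0 →
      H₂s k ≠ 0 → H₂s (α * k) ≠ 0 → H₂s ((starRingEnd ℂ) α * k) ≠ 0 →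
      P₁ k * P₁ (α * k) * P₁ ((starRingEnd ℂ) α * k)
        = P₂ k * P₂ (α * k) * P₂ ((starRingEnd ℂ) α * k) := by
  intro k hk h₁ h₁' h₁'' h₂ h₂' h₂''
  have hprim : IsPrimitiveRoot α 3 := by
    simpa [hα] using Complex.isPrimitiveRoot_exp 3 (by norm_num)
  have hω := hprim.sq_add_self_add_one_eq_zero
  have hk₁ : α * k ≠ 0 := mul_ne_zero (hprim.ne_zero three_ne_zero) hk
  have hk₂ : α ^ 2 * k ≠ 0 := mul_ne_zero (pow_ne_zero 2 (hprim.ne_zero three_ne_zero)) hk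
  rw [hprim.conj_eq_pow] at h₁'' h₂'' ⊢
  set a₁ := Complex.exp (Complex.I * β₁) ^ 3
  set a₂ := Complex.exp (Complex.I * β₂) ^ 3
  have hab : a₁ ^ 2 = a₂ ^ 2 := exp_I_mul_pow_sq_eq_sq_of_sin_eq_zero (by exact_mod_cast hsin)
  have hc : ((γ₂ : ℂ) ^ 3 - 3 * lam * γ₂) * (a₁ - a₁⁻¹)
      = ((γ₁ : ℂ) ^ 3 - 3 * lam * γ₁) * (a₂ - a₂⁻¹) := by
    rw [exp_I_mul_pow_sub_inv, exp_I_mul_pow_sub_inv]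
    have hγC := congrArg ((↑) : ℝ → ℂ) hγ
    push_cast at hγC ⊢
    linear_combination (-2 * I) * hγC
  rw [hP₁ _ hk, hP₁ _ hk₁, hP₁ _ hk₂, hP₂ _ hk, hP₂ _ hk₁, hP₂ _ hk₂, div_mul_div_comm,
    div_mul_div_comm, div_mul_div_comm, div_mul_div_comm,
    div_eq_div_iff (mul_ne_zero (mul_ne_zero h₁ h₁') h₁'') (mul_ne_zero (mul_ne_zero h₂ h₂') h₂''),
    joukowski_orbit_prod hω (exp_ne_zero _) hH₁ hk, joukowski_orbit_prod hω (exp_ne_zero _) hH₂ hk,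
    joukowski_orbit_prod hω (exp_ne_zero _) hH₁s hk,
    joukowski_orbit_prod hω (exp_ne_zero _) hH₂s hk]
  simp only [exp_neg, inv_pow]
  exact joukowski_mul_joukowski_inv_comm (pow_ne_zero 3 (exp_ne_zero _))
    (pow_ne_zero 3 (exp_ne_zero _)) hab hc _ (pow_ne_zero 3 hk)
end

section
/- Let λ > 0 and set γ₁ = √(3λ). Define H₁(k) = i(k − λ/k) − γ₁, H₁*(k) = −i(k − λ/k) − γ₁, and P₁(k) = H₁(k)/H₁*(k) for k ∈ ℂ \ {0} with H₁*(k) ≠ 0. Then for α = e^{2πi/3} and any k where all quantities are defined: P₁(k)·P₁(αk)·P₁(ᾱk) = −1, equivalently P₁(k)·P₁(ᾱk) = −1/P₁(αk). -/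
/-!
Write `zⱼ = i (αʲk - λ / (αʲk))`, so that `P₁ (αʲk) = (zⱼ - γ₁) / (-zⱼ - γ₁)` and
`∏ (zⱼ - γ₁) - ∏ (zⱼ + γ₁) = -2 γ₁ (e₂(z) + γ₁²)`. Because `1 + α + α² = 0`, the second
elementary symmetric function of the numbers `u - λ / u`, `u ∈ {k, αk, α²k}`, is `3λ`; hence
`e₂(z) = -3λ = -γ₁²`, and the numerators multiply to minus the product of the denominators.
-/

open Complex ComplexConjugate

theorem conj_eq_sq_of_pow_three_eq_one {ζ : ℂ} (h : ζ ^ 3 = 1) : conj ζ = ζ ^ 2 := by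
  rw [← inv_eq_conj (norm_eq_one_of_pow_eq_one h three_ne_zero)]
  exact inv_eq_of_mul_eq_one_right (by rw [← pow_succ', h])

theorem IsPrimitiveRoot.sq_add_self_add_one {R : Type*} [CommRing R] [IsDomain R] {ζ : R}
    (h : IsPrimitiveRoot ζ 3) : ζ ^ 2 + ζ + 1 = 0 := by
  simpa [Finset.sum_range_succ, add_comm, add_left_comm, add_assoc] using
    h.geom_sum_eq_zero (by norm_num)

section Field
variable {K : Type*} [Field K]

theorem pairwise_sum_sub_div_of_sq_add_self_add_one {ω : K} (hω : ω ^ 2 + ω + 1 = 0)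
    {k : K} (hk : k ≠ 0) (c : K) :
    (k - c / k) * (ω * k - c / (ω * k)) + (k - c / k) * (ω ^ 2 * k - c / (ω ^ 2 * k))
      + (ω * k - c / (ω * k)) * (ω ^ 2 * k - c / (ω ^ 2 * k)) = 3 * c := by
  have hω0 : ω ≠ 0 := by rintro rfl; simp at hω
  field_simp
  linear_combination (k ^ 4 * ω ^ 4 + c ^ 2 - k ^ 2 * c * ω * (ω ^ 2 + ω + 1)) * hω

theorem sub_div_neg_sub_mul_mul_eq_neg_one {z₁ z₂ z₃ γ : K}
    (he : z₁ * z₂ + z₁ * z₃ + z₂ * z₃ = -γ ^ 2)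
    (h₁ : -z₁ - γ ≠ 0) (h₂ : -z₂ - γ ≠ 0) (h₃ : -z₃ - γ ≠ 0) :
    (z₁ - γ) / (-z₁ - γ) * ((z₂ - γ) / (-z₂ - γ)) * ((z₃ - γ) / (-z₃ - γ)) = -1 := by
  rw [div_mul_div_comm, div_mul_div_comm, div_eq_iff (by simp [*])]
  linear_combination (-2 * γ) * he

end Field

theorem stmt_6 (lam : ℝ) (hlam : 0 < lam) (γ₁ : ℝ) (hγ₁ : γ₁ = Real.sqrt (3 * lam))
    (α : ℂ) (hα : α = Complex.exp (2 * Real.pi * Complex.I / 3))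
    (H₁ H₁s P₁ : ℂ → ℂ)
    (hH₁ : ∀ k : ℂ, k ≠ 0 → H₁ k = Complex.I * (k - (lam : ℂ) / k) - γ₁)
    (hH₁s : ∀ k : ℂ, k ≠ 0 → H₁s k = -(Complex.I * (k - (lam : ℂ) / k)) - γ₁)
    (hP₁ : ∀ k : ℂ, k ≠ 0 → H₁s k ≠ 0 → P₁ k = H₁ k / H₁s k) :
    ∀ k : ℂ, k ≠ 0 →
      H₁s k ≠ 0 → H₁s (α * k) ≠ 0 → H₁s ((starRingEnd ℂ) α * k) ≠ 0 →
      P₁ k * P₁ (α * k) * P₁ ((starRingEnd ℂ) α * k) = -1 ∧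
      P₁ k * P₁ ((starRingEnd ℂ) α * k) = -1 / P₁ (α * k) := by
  intro k hk h₁ h₂ h₃
  have hα3 : IsPrimitiveRoot α 3 := hα ▸ by exact_mod_cast isPrimitiveRoot_exp 3 three_ne_zero
  rw [conj_eq_sq_of_pow_three_eq_one hα3.pow_eq_one] at h₃ ⊢
  have hαk : α * k ≠ 0 := mul_ne_zero (hα3.ne_zero three_ne_zero) hk
  have hα2k : α ^ 2 * k ≠ 0 := mul_ne_zero (pow_ne_zero 2 (hα3.ne_zero three_ne_zero)) hk
  have hγ : (γ₁ : ℂ) ^ 2 = 3 * lam := by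
    rw [hγ₁]; exact_mod_cast Real.sq_sqrt (by positivity)
  have he := pairwise_sum_sub_div_of_sq_add_self_add_one hα3.sq_add_self_add_one hk (lam : ℂ)
  have hprod : P₁ k * P₁ (α * k) * P₁ (α ^ 2 * k) = -1 := by
    rw [hP₁ k hk h₁, hP₁ _ hαk h₂, hP₁ _ hα2k h₃, hH₁ k hk, hH₁ _ hαk, hH₁ _ hα2k]
    rw [hH₁s k hk] at h₁ ⊢
    rw [hH₁s _ hαk] at h₂ ⊢
    rw [hH₁s _ hα2k] at h₃ ⊢
    exact sub_div_neg_sub_mul_mul_eq_neg_one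
      (by linear_combination I ^ 2 * he + 3 * (lam : ℂ) * I_sq + hγ) h₁ h₂ h₃
  have hP : P₁ (α * k) ≠ 0 := by rintro h; simp [h] at hprod
  exact ⟨hprod, by rw [eq_div_iff hP]; linear_combination hprod⟩
end

section
/- Let l > 0 and let z₂ = (l/√3)·e^{−iπ/3} be a vertex of the equilateral triangle D with vertices z₁ = (l/√3)e^{iπ/3}, z₂ = z̄₁, z₃ = −l/√3. If z ∈ D (the closed triangle) then π/2 ≤ arg(z − z₂) ≤ 5π/6 (for z ≠ z₂). Consequently, if −π/2 ≤ arg k ≤ π/6, then 0 ≤ arg(k(z − z₂)) ≤ π, so Im(k(z−z₂)) ≥ 0 and |exp(ik(z − z₂))| ≤ 1. -/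
/-!
The triangle lies in the wedge at `z₂` spanned by the edges towards `z₁` (direction `i`) and
towards `z₃` (direction `e^{5πi/6}`). That wedge is the intersection of the half-planes
`re w ≤ 0` and `re w + √3 im w ≥ 0` for `w = z - z₂`, which contain the vertices and hence their
convex hull; on it `cos (arg w) = re w / ‖w‖` pins `arg w` to `[π/2, 5π/6]`. Adding `arg k`
keeps the argument in `[0, π]`, so `im (k w) ≥ 0` and `‖exp (i k w)‖ = e^{-im (k w)} ≤ 1`.
-/

open Complex Real

theorem LinearMap.le_of_mem_convexHull {E : Type*} [AddCommGroup E] [Module ℝ E]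
    (f : E →ₗ[ℝ] ℝ) {s : Set E} {c : ℝ} (hs : ∀ x ∈ s, f x ≤ c) {x : E}
    (hx : x ∈ convexHull ℝ s) : f x ≤ c :=
  convexHull_min hs (convex_halfSpace_le f.isLinear c) hx

theorem LinearMap.ge_of_mem_convexHull {E : Type*} [AddCommGroup E] [Module ℝ E]
    (f : E →ₗ[ℝ] ℝ) {s : Set E} {c : ℝ} (hs : ∀ x ∈ s, c ≤ f x) {x : E}
    (hx : x ∈ convexHull ℝ s) : c ≤ f x :=
  convexHull_min hs (convex_halfSpace_ge f.isLinear c) hx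

namespace Complex

theorem exp_pi_mul_I_div_three : exp (π * I / 3) = 1 / 2 + √3 / 2 * I := by
  rw [show (π : ℂ) * I / 3 = (π / 3 : ℝ) * I by push_cast; ring, exp_mul_I, ← ofReal_cos,
    ← ofReal_sin, Real.cos_pi_div_three, Real.sin_pi_div_three]
  push_cast
  ring

theorem exp_neg_pi_mul_I_div_three : exp (-(π * I / 3)) = 1 / 2 - √3 / 2 * I := by
  rw [show -((π : ℂ) * I / 3) = (-(π / 3) : ℝ) * I by push_cast; ring, exp_mul_I, ← ofReal_cos,
    ← ofReal_sin, Real.cos_neg, Real.sin_neg, Real.cos_pi_div_three, Real.sin_pi_div_three]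
  push_cast
  ring

theorem le_arg_iff_re_le {w : ℂ} (hw : w ≠ 0) (him : 0 ≤ w.im) {θ : ℝ} (hθ₀ : 0 ≤ θ)
    (hθ : θ ≤ π) : θ ≤ arg w ↔ w.re ≤ ‖w‖ * Real.cos θ := by
  rw [← norm_mul_cos_arg, mul_le_mul_iff_right₀ (norm_pos_iff.2 hw)]
  exact (Real.strictAntiOn_cos.le_iff_ge ⟨arg_nonneg_iff.2 him, arg_le_pi w⟩ ⟨hθ₀, hθ⟩).symm

theorem arg_le_iff_le_re {w : ℂ} (hw : w ≠ 0) (him : 0 ≤ w.im) {θ : ℝ} (hθ₀ : 0 ≤ θ)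
    (hθ : θ ≤ π) : arg w ≤ θ ↔ ‖w‖ * Real.cos θ ≤ w.re := by
  rw [← norm_mul_cos_arg, mul_le_mul_iff_right₀ (norm_pos_iff.2 hw)]
  exact (Real.strictAntiOn_cos.le_iff_ge ⟨hθ₀, hθ⟩ ⟨arg_nonneg_iff.2 him, arg_le_pi w⟩).symm

theorem arg_mem_Icc_of_re_nonpos_of_nonneg {w : ℂ} (hw : w ≠ 0) (hre : w.re ≤ 0)
    (hcone : 0 ≤ w.re + √3 * w.im) : arg w ∈ Set.Icc (π / 2) (5 * π / 6) := by
  have h3 : √3 ^ 2 = 3 := Real.sq_sqrt (by norm_num)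
  have him : 0 ≤ w.im := by nlinarith [Real.sqrt_nonneg 3]
  have hcos : Real.cos (5 * π / 6) = -(√3 / 2) := by
    rw [show 5 * π / 6 = π - π / 6 by ring, Real.cos_pi_sub, Real.cos_pi_div_six]
  constructor
  · rw [le_arg_iff_re_le hw him (by positivity) (by linarith [pi_pos]), Real.cos_pi_div_two,
      mul_zero]
    exact hre
  · rw [arg_le_iff_le_re hw him (by positivity) (by linarith [pi_pos]), hcos]
    have hsq : (-(2 * w.re)) ^ 2 ≤ (√3 * ‖w‖) ^ 2 := by
      rw [mul_pow, h3, Complex.sq_norm, normSq_apply]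
      nlinarith
    nlinarith [abs_le_of_sq_le_sq' hsq (by positivity)]

theorem norm_exp_I_mul_le_one {w : ℂ} (hw : 0 ≤ w.im) : ‖exp (I * w)‖ ≤ 1 := by
  rw [norm_exp, I_mul_re, Real.exp_le_one_iff]
  exact neg_nonpos.2 hw

end Complex

theorem stmt_16 (l : ℝ) (hl : 0 < l)
    (z₁ z₂ z₃ : ℂ)
    (hz₁ : z₁ = (l / Real.sqrt 3 : ℝ) * Complex.exp (Real.pi * Complex.I / 3))
    (hz₂ : z₂ = (l / Real.sqrt 3 : ℝ) * Complex.exp (-(Real.pi * Complex.I / 3)))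
    (hz₃ : z₃ = -(l / Real.sqrt 3 : ℝ))
    (D : Set ℂ) (hD : D = convexHull ℝ {z₁, z₂, z₃}) :
    ∀ z ∈ D, z ≠ z₂ →
      (Real.pi / 2 ≤ Complex.arg (z - z₂) ∧ Complex.arg (z - z₂) ≤ 5 * Real.pi / 6) ∧
      ∀ k : ℂ, k ≠ 0 → -(Real.pi / 2) ≤ Complex.arg k → Complex.arg k ≤ Real.pi / 6 →
        (0 ≤ Complex.arg (k * (z - z₂)) ∧ Complex.arg (k * (z - z₂)) ≤ Real.pi) ∧
        0 ≤ (k * (z - z₂)).im ∧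
        ‖Complex.exp (Complex.I * k * (z - z₂))‖ ≤ 1 := by
  intro z hz hne
  rw [exp_pi_mul_I_div_three] at hz₁
  rw [exp_neg_pi_mul_I_div_three] at hz₂
  subst hD
  have hc : 0 < l / √3 := by positivity
  have h3 : √3 ^ 2 = 3 := Real.sq_sqrt (by norm_num)
  have hre : z.re ≤ z₂.re := reLm.le_of_mem_convexHull (by
    rintro x (rfl | rfl | rfl) <;> simp [hz₁, hz₂, hz₃]; linarith) hz
  have hcone : z₂.re + √3 * z₂.im ≤ z.re + √3 * z.im :=
    (reLm + √3 • imLm).ge_of_mem_convexHull (by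
      rintro x (rfl | rfl | rfl) <;> simp [hz₁, hz₂, hz₃] <;> nlinarith) hz
  have hw : z - z₂ ≠ 0 := sub_ne_zero.2 hne
  have harg := arg_mem_Icc_of_re_nonpos_of_nonneg hw
    (by rw [sub_re]; linarith) (by rw [sub_re, sub_im]; linarith)
  refine ⟨harg, fun k hk hk₁ hk₂ => ?_⟩
  have hmul : arg (k * (z - z₂)) = arg k + arg (z - z₂) :=
    arg_mul hk hw ⟨by linarith [harg.1, pi_pos], by linarith [harg.2]⟩
  have him : 0 ≤ (k * (z - z₂)).im := arg_nonneg_iff.1 (by rw [hmul]; linarith [harg.1])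
  refine ⟨⟨arg_nonneg_iff.2 him, arg_le_pi _⟩, him, ?_⟩
  rw [mul_assoc]
  exact norm_exp_I_mul_le_one him
end

section
/- Let f : [−l/2, l/2] → ℝ be continuously differentiable, λ ∈ ℝ, β, γ ∈ ℝ with sin β ≠ 0, and suppose q, q_N : [−l/2, l/2] → ℝ satisfy sin β·q_N(s) + cos β·q'(s) + γ·q(s) = f(s). Define ρ(k) = ∫_{−l/2}^{l/2} exp((k+λ/k)s)·[(i/2)q_N(s) + (1/2)q'(s) + (λ/k)q(s)] ds. Then for all k ∈ ℂ \ {0}: ρ(k) = i·[H(k)·Y(k) + F(k) + C(k)], where H(k) = k e^{iβ} + λ/(k e^{iβ}) − γ, Y(k) = (1/(2 sin β))∫_{−l/2}^{l/2} exp((k+λ/k)s)·q(s)ds, F(k) = (1/(2 sin β))∫_{−l/2}^{l/2} exp((k+λ/k)s)·f(s)ds, and C(k) = (e^{iβ}/(2 sin β))·[e(−k)q(−l/2) − e(k)q(l/2)] with e(k) = exp((k+λ/k)l/2). -/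
/-!
Eliminating `q_N` with the boundary condition writes `ρ(k)` as a combination of the integrals
of `f`, `q'` and `q` against `exp ((k + λ/k) s)`. Integrating the `q'` term by parts produces the
boundary term `C(k)` and shifts the coefficient of `Y(k)` by `i e^{iβ} (k + λ/k)`; that coefficient
then equals `i H(k)` because `e^{-iβ} = e^{iβ} - 2i sin β`.
-/

open MeasureTheory Set Complex

theorem ContDiffOn.intervalIntegrable_deriv {E : Type*} [NormedAddCommGroup E] [NormedSpace ℝ E]
    {f : ℝ → E} {a b : ℝ} (hab : a ≤ b) (hf : ContDiffOn ℝ 1 f (Icc a b)) :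
    IntervalIntegrable (deriv f) volume a b := by
  rcases hab.eq_or_lt with rfl | hlt
  · exact IntervalIntegrable.refl
  refine ((hf.continuousOn_derivWithin (uniqueDiffOn_Icc hlt) le_rfl).intervalIntegrable_of_Icc
    hab).congr_uIoo fun x hx => ?_
  rw [uIoo_of_le hab] at hx
  exact derivWithin_of_mem_nhds (Icc_mem_nhds hx.1 hx.2)

theorem IntervalIntegrable.ofReal {f : ℝ → ℝ} {a b : ℝ} {μ : Measure ℝ}
    (hf : IntervalIntegrable f μ a b) : IntervalIntegrable (fun x => (f x : ℂ)) μ a b :=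
  ⟨hf.1.ofReal, hf.2.ofReal⟩

theorem IntervalIntegrable.cexp_const_mul_ofReal {g : ℝ → ℝ} {a b : ℝ}
    (hg : IntervalIntegrable g volume a b) (μ : ℂ) :
    IntervalIntegrable (fun s => exp (μ * s) * (g s : ℂ)) volume a b :=
  hg.ofReal.continuousOn_mul (by fun_prop)

theorem hasDerivAt_cexp_const_mul_ofReal (μ : ℂ) (s : ℝ) :
    HasDerivAt (fun t : ℝ => exp (μ * t)) (μ * exp (μ * s)) s := by
  simpa [mul_comm] using ((hasDerivAt_id s).ofReal_comp.const_mul μ).cexp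

theorem integral_cexp_const_mul_mul_deriv {a b : ℝ} (hab : a ≤ b) {q : ℝ → ℝ}
    (hq : ContDiffOn ℝ 1 q (Icc a b)) (μ : ℂ) :
    ∫ s in a..b, exp (μ * s) * ((deriv q s : ℝ) : ℂ) =
      exp (μ * b) * q b - exp (μ * a) * q a - μ * ∫ s in a..b, exp (μ * s) * q s := by
  have hcont : Continuous fun t : ℝ => exp (μ * t) := by fun_prop
  rw [intervalIntegral.integral_mul_deriv_eq_deriv_mul_of_hasDerivAt hcont.continuousOn
    (continuous_ofReal.comp_continuousOn (hq.continuousOn.mono (by rw [uIcc_of_le hab])))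
    (fun s _ => hasDerivAt_cexp_const_mul_ofReal μ s) ?_ ?_ ?_]
  · simp only [Function.comp_apply, mul_assoc, intervalIntegral.integral_const_mul]
  · intro s hs
    rw [min_eq_left hab, max_eq_right hab] at hs
    exact (((hq s (Ioo_subset_Icc_self hs)).differentiableWithinAt one_ne_zero).differentiableAt
      (Icc_mem_nhds hs.1 hs.2)).hasDerivAt.ofReal_comp
  · exact (hcont.intervalIntegrable a b).const_mul μ
  · exact (hq.intervalIntegrable_deriv hab).ofReal

theorem inv_exp_I_mul (z : ℂ) : (exp (I * z))⁻¹ = exp (I * z) - 2 * I * sin z := by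
  rw [← exp_neg, mul_comm, ← neg_mul, exp_mul_I, exp_mul_I, cos_neg, sin_neg]
  ring

theorem integrand_eq_of_boundary_condition {β γ qN dq q f : ℝ} (hβ : Real.sin β ≠ 0)
    (h : Real.sin β * qN + Real.cos β * dq + γ * q = f) (c : ℂ) :
    I / 2 * qN + 1 / 2 * dq + c * q =
      I / (2 * Real.sin β) * f - I * exp (I * β) / (2 * Real.sin β) * dq
        + (c - I * γ / (2 * Real.sin β)) * q := by
  have hS : (Real.sin β : ℂ) ≠ 0 := ofReal_ne_zero.2 hβ
  rw [← h, mul_comm I (β : ℂ), exp_mul_I, ← ofReal_cos, ← ofReal_sin]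
  simp only [ofReal_add, ofReal_mul]
  field_simp
  linear_combination (Real.sin β * dq : ℂ) * I_sq

theorem integral_cexp_mul_eq_of_boundary_condition {a b β γ : ℝ} (hab : a ≤ b)
    (hβ : Real.sin β ≠ 0) {f q qN : ℝ → ℝ} (hf : ContinuousOn f (Icc a b))
    (hq : ContDiffOn ℝ 1 q (Icc a b))
    (hbc : ∀ s ∈ Icc a b, Real.sin β * qN s + Real.cos β * deriv q s + γ * q s = f s) (μ c : ℂ) :
    ∫ s in a..b, exp (μ * s) * (I / 2 * qN s + 1 / 2 * ((deriv q s : ℝ) : ℂ) + c * q s) =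
      I / (2 * Real.sin β) * (∫ s in a..b, exp (μ * s) * f s)
        - I * exp (I * β) / (2 * Real.sin β) *
          (∫ s in a..b, exp (μ * s) * ((deriv q s : ℝ) : ℂ))
        + (c - I * γ / (2 * Real.sin β)) * ∫ s in a..b, exp (μ * s) * q s := by
  have hIf := (hf.intervalIntegrable_of_Icc hab).cexp_const_mul_ofReal μ
  have hIq := (hq.continuousOn.intervalIntegrable_of_Icc hab).cexp_const_mul_ofReal μ
  have hIdq := (hq.intervalIntegrable_deriv hab).cexp_const_mul_ofReal μ
  simp only [← intervalIntegral.integral_const_mul]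
  rw [← intervalIntegral.integral_sub, ← intervalIntegral.integral_add]
  · refine intervalIntegral.integral_congr fun s hs => ?_
    rw [uIcc_of_le hab] at hs
    simp only [integrand_eq_of_boundary_condition hβ (hbc s hs)]
    ring
  · exact (hIf.const_mul _).sub (hIdq.const_mul _)
  · exact hIq.const_mul _
  · exact hIf.const_mul _
  · exact hIdq.const_mul _


theorem stmt_18 (lam l β γ : ℝ) (hl : 0 < l) (hβ : Real.sin β ≠ 0)
    (f q qN : ℝ → ℝ)
    (hf : ContDiffOn ℝ 1 f (Set.Icc (-l/2) (l/2)))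
    (hq : ContDiffOn ℝ 1 q (Set.Icc (-l/2) (l/2)))
    (hbc : ∀ s ∈ Set.Icc (-l/2) (l/2),
      Real.sin β * qN s + Real.cos β * deriv q s + γ * q s = f s)
    (ρ H Y F C e : ℂ → ℂ)
    (hρ : ∀ k : ℂ, k ≠ 0 → ρ k = ∫ s in (-l/2)..(l/2),
      Complex.exp ((k + (lam : ℂ) / k) * s) *
        ((Complex.I / 2) * (qN s : ℂ) + (1 / 2) * ((deriv q s : ℝ) : ℂ)
          + ((lam : ℂ) / k) * (q s : ℂ)))
    (hH : ∀ k : ℂ, k ≠ 0 → H k = k * Complex.exp (Complex.I * β)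
      + (lam : ℂ) / (k * Complex.exp (Complex.I * β)) - γ)
    (hY : ∀ k : ℂ, k ≠ 0 → Y k = (1 / (2 * (Real.sin β : ℂ))) *
      ∫ s in (-l/2)..(l/2), Complex.exp ((k + (lam : ℂ) / k) * s) * (q s : ℂ))
    (hF : ∀ k : ℂ, k ≠ 0 → F k = (1 / (2 * (Real.sin β : ℂ))) *
      ∫ s in (-l/2)..(l/2), Complex.exp ((k + (lam : ℂ) / k) * s) * (f s : ℂ))
    (he : ∀ k : ℂ, k ≠ 0 → e k = Complex.exp ((k + (lam : ℂ) / k) * l / 2))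
    (hC : ∀ k : ℂ, k ≠ 0 → C k = (Complex.exp (Complex.I * β) / (2 * (Real.sin β : ℂ))) *
      (e (-k) * (q (-l/2) : ℂ) - e k * (q (l/2) : ℂ))) :
    ∀ k : ℂ, k ≠ 0 → ρ k = Complex.I * (H k * Y k + F k + C k) := by
  intro k hk
  have hab : -l/2 ≤ l/2 := by linarith
  have hS : sin (β : ℂ) ≠ 0 := ofReal_sin β ▸ ofReal_ne_zero.2 hβ
  set μ := k + (lam : ℂ) / k with hμ
  have hEb : e k = exp (μ * ↑(l / 2)) := by
    rw [he k hk, hμ]; congr 1; push_cast; ring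
  have hEa : e (-k) = exp (μ * ↑(-l / 2)) := by
    rw [he (-k) (neg_ne_zero.2 hk), hμ, div_neg]; congr 1; push_cast; ring
  have hsymbol : I * exp (I * β) / (2 * sin β) * μ + (lam / k - I * γ / (2 * sin β)) =
      I * (k * exp (I * β) + lam / (k * exp (I * β)) - γ) / (2 * sin β) := by
    rw [hμ, div_mul_eq_div_div (lam : ℂ) k, div_eq_mul_inv (lam / k : ℂ), inv_exp_I_mul]
    field_simp
    linear_combination (2 * lam * sin (β : ℂ)) * I_sq
  rw [hρ k hk, integral_cexp_mul_eq_of_boundary_condition hab hβ hf.continuousOn hq hbc,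
    integral_cexp_const_mul_mul_deriv hab hq, hH k hk, hY k hk, hF k hk, hC k hk, hEa, hEb,
    ofReal_sin]
  linear_combination (∫ s in (-l/2)..(l/2), exp (μ * s) * q s) * hsymbol
end
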